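/- There is an absolute constant C > 0 such that for every ε ∈ (0,1] and all r, t > 0 with 1 < r < t/100, the kernel satisfies |G_ε(r,t)| ≤ C · t^{-3/2}. -/

import Mathlib

/-!
Non-stationary phase. Write the integrand as `exp ψ(s) · s^{-3/2}` with
`ψ(s) = i((s - t)z + r²/(4s))`. For `s ≥ t > 100 r` we have `Re ψ ≤ 0` and `|ψ'(s)| ≥ 1/5`, so
`s^{-3/2} = ψ'(s) g(s)` with `g = s^{-3/2}/ψ'` of size `O(s^{-3/2})` and `g' = O(s^{-5/2})`.
Integrating `(exp ψ)' g` by parts leaves the boundary term `g(t)` and `∫_t^∞ |g'|`, both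
`O(t^{-3/2})`; estimating the integrand directly would only give `O(t^{-1/2})`.
-/

open MeasureTheory

/-- The Green's function kernel `G_ε(r,t)` of `(−Δ − z)^{-1} e^{itΔ}` on `ℝ³`,
with `z = 1/4 + iε`. -/
noncomputable def Gker (ε r t : ℝ) : ℂ :=
  (Complex.exp (-(Real.pi / 4 : ℝ) * Complex.I) / ((8 * Real.pi ^ ((3 : ℝ) / 2) : ℝ))) *
    ∫ s in Set.Ioi t,
      Complex.exp (Complex.I * (((s : ℂ) - (t : ℂ)) * (1 / 4 + (ε : ℂ) * Complex.I)
          + (r : ℂ) ^ 2 / (4 * (s : ℂ)))) * ((s ^ (-(3 : ℝ) / 2) : ℝ) : ℂ)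

open Set Filter Topology Complex

theorem integrableOn_cexp_mul {φ f : ℝ → ℂ} {S : Set ℝ} (hS : MeasurableSet S)
    (hφ : ContinuousOn φ S) (hre : ∀ s ∈ S, (φ s).re ≤ 0) (hf : IntegrableOn f S) :
    IntegrableOn (fun s => cexp (φ s) * f s) S :=
  hf.bdd_mul (c := 1) ((continuous_exp.comp_continuousOn hφ).aestronglyMeasurable hS) <|
    (ae_restrict_iff' hS).2 <| .of_forall fun s hs => by
      simpa [Complex.norm_exp] using hre s hs

theorem norm_integral_Ioi_cexp_mul_deriv_le {φ g : ℝ → ℂ} {t : ℝ}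
    (hφ : ∀ s ∈ Ici t, DifferentiableAt ℝ φ s) (hg : ∀ s ∈ Ici t, DifferentiableAt ℝ g s)
    (hre : ∀ s ∈ Ici t, (φ s).re ≤ 0)
    (hφg : IntegrableOn (fun s => deriv φ s * g s) (Ioi t))
    (hg' : IntegrableOn (deriv g) (Ioi t)) (hlim : Tendsto g atTop (𝓝 0)) :
    ‖∫ s in Ioi t, cexp (φ s) * (deriv φ s * g s)‖ ≤ ‖g t‖ + ∫ s in Ioi t, ‖deriv g s‖ := by
  have hcont : ContinuousOn φ (Ioi t) := fun s hs =>
    (hφ s (Ioi_subset_Ici_self hs)).continuousAt.continuousWithinAt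
  have hre' : ∀ s ∈ Ioi t, (φ s).re ≤ 0 := fun s hs => hre s (Ioi_subset_Ici_self hs)
  have hnorm : ∀ s ∈ Ici t, ‖cexp (φ s)‖ ≤ 1 := fun s hs => by
    simpa [Complex.norm_exp] using hre s hs
  have hI₁ := integrableOn_cexp_mul measurableSet_Ioi hcont hre' hφg
  have hI₂ := integrableOn_cexp_mul measurableSet_Ioi hcont hre' hg'
  have hderiv : ∀ s ∈ Ici t, HasDerivAt (fun s => cexp (φ s) * g s)
      (cexp (φ s) * (deriv φ s * g s) + cexp (φ s) * deriv g s) s := fun s hs =>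
    (((hφ s hs).hasDerivAt.cexp).mul (hg s hs).hasDerivAt).congr_deriv (by ring)
  have hvanish : Tendsto (fun s => cexp (φ s) * g s) atTop (𝓝 0) := by
    refine squeeze_zero_norm' ?_ (tendsto_norm_zero.comp hlim)
    filter_upwards [eventually_ge_atTop t] with s hs
    simpa [norm_mul] using mul_le_of_le_one_left (norm_nonneg _) (hnorm s hs)
  have hparts := integral_Ioi_of_hasDerivAt_of_tendsto' hderiv (hI₁.add hI₂) hvanish
  rw [integral_add hI₁ hI₂] at hparts
  rw [eq_sub_of_add_eq hparts, zero_sub, sub_eq_add_neg, ← neg_add, norm_neg]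
  refine (norm_add_le _ _).trans (add_le_add ?_ ?_)
  · simpa [norm_mul] using mul_le_of_le_one_left (norm_nonneg _) (hnorm t self_mem_Ici)
  · refine norm_integral_le_of_norm_le hg'.norm ((ae_restrict_iff' measurableSet_Ioi).2 ?_)
    filter_upwards with s hs
    simpa [norm_mul] using
      mul_le_of_le_one_left (norm_nonneg _) (hnorm s (Ioi_subset_Ici_self hs))

theorem hasDerivAt_ofReal_rpow {p s : ℝ} (hs : 0 < s) :
    HasDerivAt (fun s : ℝ => ((s ^ p : ℝ) : ℂ)) ((p * s ^ (p - 1) : ℝ) : ℂ) s :=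
  (Real.hasDerivAt_rpow_const (Or.inl hs.ne')).ofReal_comp

namespace Gker

noncomputable def phase (ε r t s : ℝ) : ℂ :=
  I * (((s : ℂ) - (t : ℂ)) * (1 / 4 + (ε : ℂ) * I) + (r : ℂ) ^ 2 / (4 * (s : ℂ)))

noncomputable def phaseDeriv (ε r s : ℝ) : ℂ :=
  I * ((1 / 4 + (ε : ℂ) * I) - (r : ℂ) ^ 2 / (4 * (s : ℂ) ^ 2))

noncomputable def amplitude (ε r s : ℝ) : ℂ :=
  ((s ^ (-(3 : ℝ) / 2) : ℝ) : ℂ) / phaseDeriv ε r s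

theorem re_phase (ε r t s : ℝ) : (phase ε r t s).re = -(ε * (s - t)) := by
  have : phase ε r t s = I * (((s - t) / 4 + r ^ 2 / (4 * s) : ℝ) + (ε * (s - t) : ℝ) * I) := by
    simp only [phase]; push_cast; ring
  rw [this]
  simp only [mul_re, mul_im, add_re, add_im, I_re, I_im, ofReal_re, ofReal_im]
  ring

theorem hasDerivAt_phase (ε r t : ℝ) {s : ℝ} (hs : s ≠ 0) :
    HasDerivAt (phase ε r t) (phaseDeriv ε r s) s := by
  have hs' : (s : ℂ) ≠ 0 := ofReal_ne_zero.2 hs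
  have h : HasDerivAt (fun w : ℂ => I * ((w - t) * (1 / 4 + ε * I) + r ^ 2 / (4 * w)))
      (I * (1 * (1 / 4 + ε * I) + (0 * (4 * s) - r ^ 2 * (4 * 1)) / (4 * s) ^ 2)) s :=
    ((((hasDerivAt_id _).sub_const _).mul_const _).add
      ((hasDerivAt_const _ _).div ((hasDerivAt_id _).const_mul 4) (by simp [hs']))).const_mul I
  refine h.comp_ofReal.congr_deriv ?_
  simp only [phaseDeriv]
  field_simp
  ring

theorem hasDerivAt_phaseDeriv (ε r : ℝ) {s : ℝ} (hs : s ≠ 0) :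
    HasDerivAt (phaseDeriv ε r) (I * (r ^ 2 / (2 * s ^ 3))) s := by
  have hs' : (s : ℂ) ≠ 0 := ofReal_ne_zero.2 hs
  have h : HasDerivAt (fun w : ℂ => I * ((1 / 4 + ε * I) - r ^ 2 / (4 * w ^ 2)))
      (I * (0 - (0 * (4 * s ^ 2) - r ^ 2 * (4 * ((2 : ℕ) * s ^ (2 - 1)))) / (4 * s ^ 2) ^ 2)) s :=
    ((hasDerivAt_const _ _).sub
      ((hasDerivAt_const _ _).div ((hasDerivAt_pow 2 _).const_mul 4) (by simp [hs']))).const_mul I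
  refine h.comp_ofReal.congr_deriv ?_
  push_cast
  field_simp
  ring

theorem one_fifth_le_norm_phaseDeriv (ε : ℝ) {r s : ℝ} (hr : 0 ≤ r) (hrs : 100 * r ≤ s)
    (hs : 0 < s) : 1 / 5 ≤ ‖phaseDeriv ε r s‖ := by
  have hsmall : r ^ 2 / (4 * s ^ 2) ≤ 1 / 40000 := by
    rw [div_le_iff₀ (by positivity)]
    nlinarith
  have hre : (phaseDeriv ε r s).im = 1 / 4 - r ^ 2 / (4 * s ^ 2) := by
    have : phaseDeriv ε r s = I * ((1 / 4 - r ^ 2 / (4 * s ^ 2) : ℝ) + ε * I) := by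
      simp only [phaseDeriv]; push_cast; ring
    rw [this]
    simp only [mul_re, mul_im, add_re, add_im, I_re, I_im, ofReal_re, ofReal_im]
    ring
  calc (1 : ℝ) / 5 ≤ |(phaseDeriv ε r s).im| := by rw [hre, abs_of_pos (by linarith)]; linarith
    _ ≤ ‖phaseDeriv ε r s‖ := abs_im_le_norm _

theorem hasDerivAt_amplitude (ε r : ℝ) {s : ℝ} (hs : 0 < s) (hne : phaseDeriv ε r s ≠ 0) :
    HasDerivAt (amplitude ε r)
      (((-(3 : ℝ) / 2 * s ^ (-(5 : ℝ) / 2) : ℝ) : ℂ) / phaseDeriv ε r s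
        - ((s ^ (-(3 : ℝ) / 2) : ℝ) : ℂ) * (I * (r ^ 2 / (2 * s ^ 3))) / phaseDeriv ε r s ^ 2)
      s := by
  refine ((hasDerivAt_ofReal_rpow hs).div (hasDerivAt_phaseDeriv ε r hs.ne') hne).congr_deriv ?_
  rw [show -(3 : ℝ) / 2 - 1 = -(5 : ℝ) / 2 by norm_num]
  field_simp

theorem norm_amplitude_le (ε : ℝ) {r s : ℝ} (hr : 0 ≤ r) (hrs : 100 * r ≤ s) (hs : 0 < s) :
    ‖amplitude ε r s‖ ≤ 5 * s ^ (-(3 : ℝ) / 2) := by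
  have hP := one_fifth_le_norm_phaseDeriv ε hr hrs hs
  rw [amplitude, norm_div, norm_real, Real.norm_of_nonneg (by positivity),
    div_le_iff₀ (by linarith)]
  nlinarith [Real.rpow_nonneg hs.le (-(3 : ℝ) / 2)]

theorem norm_deriv_amplitude_le (ε : ℝ) {r s : ℝ} (hr : 0 ≤ r) (hrs : 100 * r ≤ s)
    (hs : 0 < s) : ‖deriv (amplitude ε r) s‖ ≤ 33 * s ^ (-(5 : ℝ) / 2) := by
  have hP := one_fifth_le_norm_phaseDeriv ε hr hrs hs
  have hne : phaseDeriv ε r s ≠ 0 := norm_pos_iff.1 (by linarith)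
  have hψ'' : ‖I * ((r : ℂ) ^ 2 / (2 * (s : ℂ) ^ 3))‖ ≤ s⁻¹ := by
    have : I * ((r : ℂ) ^ 2 / (2 * (s : ℂ) ^ 3)) = I * ((r ^ 2 / (2 * s ^ 3) : ℝ) : ℂ) := by
      push_cast; ring
    rw [this, norm_mul, norm_I, one_mul, norm_real, Real.norm_of_nonneg (by positivity),
      div_le_iff₀ (by positivity), inv_mul_eq_div, show 2 * s ^ 3 / s = 2 * s ^ 2 by field_simp]
    nlinarith
  have hpow : s ^ (-(3 : ℝ) / 2) * s⁻¹ = s ^ (-(5 : ℝ) / 2) := by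
    rw [← Real.rpow_neg_one, ← Real.rpow_add hs]; norm_num
  have h₁ : ‖((-(3 : ℝ) / 2 * s ^ (-(5 : ℝ) / 2) : ℝ) : ℂ) / phaseDeriv ε r s‖
      ≤ 15 / 2 * s ^ (-(5 : ℝ) / 2) := by
    rw [norm_div, norm_real, Real.norm_eq_abs, abs_mul,
      abs_of_nonneg (by positivity : (0 : ℝ) ≤ s ^ (-(5 : ℝ) / 2)), div_le_iff₀ (by linarith)]
    nlinarith [Real.rpow_nonneg hs.le (-(5 : ℝ) / 2)]
  have h₂ : ‖((s ^ (-(3 : ℝ) / 2) : ℝ) : ℂ) * (I * (r ^ 2 / (2 * s ^ 3))) / phaseDeriv ε r s ^ 2‖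
      ≤ 25 * s ^ (-(5 : ℝ) / 2) := by
    rw [norm_div, norm_mul, norm_pow, norm_real, Real.norm_of_nonneg (by positivity),
      div_le_iff₀ (by positivity), ← hpow]
    have hY : 0 ≤ s ^ (-(3 : ℝ) / 2) * s⁻¹ := by positivity
    have hP2 : 1 / 25 ≤ ‖phaseDeriv ε r s‖ ^ 2 := by nlinarith
    nlinarith [mul_le_mul_of_nonneg_left hψ'' (Real.rpow_nonneg hs.le (-(3 : ℝ) / 2)),
      mul_le_mul_of_nonneg_left hP2 hY]
  rw [(hasDerivAt_amplitude ε r hs hne).deriv]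
  calc _ ≤ 15 / 2 * s ^ (-(5 : ℝ) / 2) + 25 * s ^ (-(5 : ℝ) / 2) :=
        (norm_sub_le _ _).trans (add_le_add h₁ h₂)
    _ ≤ 33 * s ^ (-(5 : ℝ) / 2) := by nlinarith [Real.rpow_nonneg hs.le (-(5 : ℝ) / 2)]

theorem tendsto_amplitude_atTop (ε : ℝ) {r : ℝ} (hr : 0 ≤ r) :
    Tendsto (amplitude ε r) atTop (𝓝 0) := by
  have hdecay : Tendsto (fun s : ℝ => 5 * s ^ (-(3 : ℝ) / 2)) atTop (𝓝 0) := by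
    simpa [neg_div] using (tendsto_rpow_neg_atTop (y := 3 / 2) (by norm_num)).const_mul 5
  refine squeeze_zero_norm' ?_ hdecay
  filter_upwards [eventually_ge_atTop (max (100 * r) 1)] with s hs
  exact norm_amplitude_le ε hr (le_of_max_le_left hs) (by linarith [le_of_max_le_right hs])

theorem ae_norm_deriv_amplitude_le (ε : ℝ) {r t : ℝ} (hr : 0 ≤ r) (hrt : 100 * r ≤ t)
    (ht : 0 < t) :
    ∀ᵐ s ∂volume.restrict (Ioi t), ‖deriv (amplitude ε r) s‖ ≤ 33 * s ^ (-(5 : ℝ) / 2) :=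
  (ae_restrict_iff' measurableSet_Ioi).2 <| .of_forall fun _ hs =>
    norm_deriv_amplitude_le ε hr (hrt.trans (le_of_lt hs)) (ht.trans hs)

theorem integrableOn_deriv_amplitude (ε : ℝ) {r t : ℝ} (hr : 0 ≤ r) (hrt : 100 * r ≤ t)
    (ht : 0 < t) :
    IntegrableOn (deriv (amplitude ε r)) (Ioi t) :=
  Integrable.mono' ((integrableOn_Ioi_rpow_of_lt (by norm_num) ht).const_mul 33)
    (measurable_deriv _).aestronglyMeasurable (ae_norm_deriv_amplitude_le ε hr hrt ht)

theorem integral_norm_deriv_amplitude_le (ε : ℝ) {r t : ℝ} (hr : 0 ≤ r) (hrt : 100 * r ≤ t)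
    (ht : 0 < t) :
    ∫ s in Ioi t, ‖deriv (amplitude ε r) s‖ ≤ 22 * t ^ (-(3 : ℝ) / 2) := by
  have hmajorant :=
    (integrableOn_Ioi_rpow_of_lt (a := -(5 : ℝ) / 2) (by norm_num) ht).const_mul 33
  calc ∫ s in Ioi t, ‖deriv (amplitude ε r) s‖
      ≤ ∫ s in Ioi t, 33 * s ^ (-(5 : ℝ) / 2) :=
        integral_mono_of_nonneg (.of_forall fun _ => norm_nonneg _) hmajorant
          (ae_norm_deriv_amplitude_le ε hr hrt ht)
    _ = 22 * t ^ (-(3 : ℝ) / 2) := by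
        rw [integral_const_mul, integral_Ioi_rpow_of_lt (by norm_num) ht]
        norm_num
        ring

theorem norm_integral_cexp_phase_le {ε r t : ℝ} (hε : 0 ≤ ε) (hr : 0 ≤ r) (hrt : 100 * r ≤ t)
    (ht : 0 < t) :
    ‖∫ s in Ioi t, cexp (phase ε r t s) * ((s ^ (-(3 : ℝ) / 2) : ℝ) : ℂ)‖
      ≤ 27 * t ^ (-(3 : ℝ) / 2) := by
  have hpos : ∀ s ∈ Ici t, 0 < s := fun s hs => ht.trans_le hs
  have hrs : ∀ s ∈ Ici t, 100 * r ≤ s := fun s hs => hrt.trans hs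
  have hne : ∀ s ∈ Ici t, phaseDeriv ε r s ≠ 0 := fun s hs =>
    norm_pos_iff.1 <|
      (one_fifth_le_norm_phaseDeriv ε hr (hrs s hs) (hpos s hs)).trans_lt' (by norm_num)
  have hfactor : ∀ s ∈ Ici t,
      deriv (phase ε r t) s * amplitude ε r s = ((s ^ (-(3 : ℝ) / 2) : ℝ) : ℂ) := fun s hs => by
    rw [(hasDerivAt_phase ε r t (hpos s hs).ne').deriv, amplitude, mul_div_cancel₀ _ (hne s hs)]
  rw [setIntegral_congr_fun measurableSet_Ioi fun s hs => by
    rw [← hfactor s (Ioi_subset_Ici_self hs)]]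
  calc _ ≤ ‖amplitude ε r t‖ + ∫ s in Ioi t, ‖deriv (amplitude ε r) s‖ := by
        refine norm_integral_Ioi_cexp_mul_deriv_le
          (fun s hs => (hasDerivAt_phase ε r t (hpos s hs).ne').differentiableAt)
          (fun s hs => (hasDerivAt_amplitude ε r (hpos s hs) (hne s hs)).differentiableAt)
          (fun s hs => ?_) ?_ (integrableOn_deriv_amplitude ε hr hrt ht)
          (tendsto_amplitude_atTop ε hr)
        · rw [re_phase]
          exact neg_nonpos.2 (mul_nonneg hε (sub_nonneg.2 hs))
        · refine IntegrableOn.congr_fun (integrableOn_Ioi_rpow_of_lt (by norm_num) ht).ofReal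
            (fun s hs => (hfactor s (Ioi_subset_Ici_self hs)).symm) measurableSet_Ioi
    _ ≤ 5 * t ^ (-(3 : ℝ) / 2) + 22 * t ^ (-(3 : ℝ) / 2) :=
        add_le_add (norm_amplitude_le ε hr hrt ht) (integral_norm_deriv_amplitude_le ε hr hrt ht)
    _ = 27 * t ^ (-(3 : ℝ) / 2) := by ring

end Gker

/-- There is an absolute constant `C > 0` such that for every `ε ∈ (0,1]` and all
`r, t > 0` with `1 < r < t/100`, `|G_ε(r,t)| ≤ C · t^{-3/2}`. -/
theorem stmt1 :
    ∃ C : ℝ, 0 < C ∧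
      ∀ ε ∈ Set.Ioc (0 : ℝ) 1, ∀ r t : ℝ, 0 < r → 0 < t → 1 < r → r < t / 100 →
        ‖Gker ε r t‖ ≤ C * t ^ (-(3 : ℝ) / 2) := by
  refine ⟨27, by norm_num, ?_⟩
  rintro ε ⟨hε, -⟩ r t hr ht - hrt
  have hprefactor : ‖cexp (-(Real.pi / 4 : ℝ) * I) / ((8 * Real.pi ^ ((3 : ℝ) / 2) : ℝ) : ℂ)‖
      ≤ 1 := by
    rw [norm_div, ← ofReal_neg, norm_exp_ofReal_mul_I, norm_real,
      Real.norm_of_nonneg (by positivity), div_le_one (by positivity)]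
    nlinarith [Real.one_le_rpow (by linarith [Real.pi_gt_three] : (1 : ℝ) ≤ Real.pi)
      (by norm_num : (0 : ℝ) ≤ 3 / 2)]
  rw [Gker, norm_mul]
  exact (mul_le_of_le_one_left (norm_nonneg _) hprefactor).trans
    (Gker.norm_integral_cexp_phase_le hε.le hr.le (by linarith) ht)
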